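/- Let G be a group generated by elements a_1,…,a_m (m ≥ 2) which is δ-hyperbolic. Let ℓ and a be integers with 1 ≤ a ≤ ℓ and let x ∈ S_{2ℓ,4a}. Then the number of pairs (g,g') ∈ S_{ℓ,a} × S_{ℓ,a} such that x = gg' is at most |B_{6a+2δ}|. -/

import Mathlib

/-!
Fix one factorisation `x = g₀ g₀'` with both factors in `S_{ℓ,a}`. For any other such
factorisation `x = g g'`, the Gromov products `(g₀, x)` and `(x, g)` are both at least
`ℓ - 5a/2`: since `g₀⁻¹x = g₀'`, the product `(g₀, x)` equals `(‖g₀‖ + ‖x‖ - ‖g₀'‖)/2`,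
and `‖x‖ > 2ℓ - 4a` (likewise for `(x, g)`).
Hyperbolicity then makes `(g₀, g)` at least `ℓ - 5a/2 - δ`, i.e. `‖g₀⁻¹ g‖ ≤ 5a + 2δ`.
Since a factorisation of `x` is determined by its first factor, `g ↦ g₀⁻¹ g` injects the
factorisations into `B_{5a+2δ}`.
-/

open Filter Set

namespace GrowthRQ

variable {G : Type*} [Group G] {m : ℕ}

/-- Word norm with respect to the generators `gen i` and their inverses. -/
noncomputable def wordNorm (gen : Fin m → G) (x : G) : ℕ :=
  sInf {n | ∃ w : List (Fin m × Bool), w.length = n ∧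
    (w.map (fun p => if p.2 then gen p.1 else (gen p.1)⁻¹)).prod = x}

/-- Ball of (real) radius `r` for the word norm. -/
def ball (gen : Fin m → G) (r : ℝ) : Set G := {x | (wordNorm gen x : ℝ) ≤ r}

/-- Annulus of elements of norm in `(ℓ - a, ℓ]`. -/
def ann (gen : Fin m → G) (ℓ a : ℝ) : Set G := ball gen ℓ \ ball gen (ℓ - a)

/-- Growth exponent in base `2m-1`. (The limit exists by submultiplicativity,
so it equals the `limsup`.) -/
noncomputable def growthExponent (gen : Fin m → G) : ℝ :=
  Filter.limsup (fun L : ℕ => Real.logb (2 * (m : ℝ) - 1) ((ball gen L).ncard) / L) Filter.atTop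

/-- Gromov product with origin `e`. -/
noncomputable def gromov (gen : Fin m → G) (x y : G) : ℝ :=
  ((wordNorm gen x : ℝ) + (wordNorm gen y : ℝ) - (wordNorm gen (x⁻¹ * y) : ℝ)) / 2

/-- `δ`-hyperbolicity via the Gromov product. -/
def IsHyperbolic (gen : Fin m → G) (δ : ℝ) : Prop :=
  ∀ x y z : G, gromov gen x z ≥ min (gromov gen x y) (gromov gen y z) - δ

/-- Non-elementary: not virtually cyclic. -/
def NonElementary (G : Type*) [Group G] : Prop :=
  ¬ ∃ H : Subgroup G, H.index ≠ 0 ∧ IsCyclic H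

/-- Probability, for `N` independent uniform choices of relators in the ball of radius `ℓ`,
that the chosen tuple satisfies `P`. -/
noncomputable def quotProb (gen : Fin m → G) (ℓ N : ℕ) (P : (Fin N → G) → Prop) : ℝ :=
  (({r : Fin N → G | (∀ i, r i ∈ ball gen (ℓ : ℝ)) ∧ P r}).ncard : ℝ) /
  (({r : Fin N → G | ∀ i, r i ∈ ball gen (ℓ : ℝ)}).ncard : ℝ)

/-- Images of the generators in the quotient by the normal closure of the relators. -/
noncomputable def quotGen (gen : Fin m → G) {N : ℕ} (r : Fin N → G) :
    Fin m → G ⧸ Subgroup.normalClosure (Set.range r) :=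
  fun i => QuotientGroup.mk (gen i)

section WordNorm

variable (gen : Fin m → G)

def evalWord (w : List (Fin m × Bool)) : G :=
  (w.map fun p => if p.2 then gen p.1 else (gen p.1)⁻¹).prod

def invWord (w : List (Fin m × Bool)) : List (Fin m × Bool) :=
  (w.map fun p => (p.1, !p.2)).reverse

lemma length_invWord (w : List (Fin m × Bool)) : (invWord w).length = w.length := by
  simp [invWord]

lemma evalWord_invWord (w : List (Fin m × Bool)) :
    evalWord gen (invWord w) = (evalWord gen w)⁻¹ := by
  induction w with
  | nil => simp [evalWord, invWord]
  | cons p w ih =>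
    simp only [evalWord, invWord] at ih ⊢
    simp only [List.map_cons, List.reverse_cons, List.map_append, List.prod_append, ih,
      List.map_nil, List.prod_cons, List.prod_nil, mul_one, mul_inv_rev]
    cases p.2 <;> simp

lemma exists_evalWord_eq (hgen : Subgroup.closure (range gen) = ⊤) (x : G) :
    ∃ w, evalWord gen w = x := by
  induction hgen ▸ Subgroup.mem_top x using Subgroup.closure_induction with
  | mem y hy =>
    obtain ⟨i, rfl⟩ := hy
    exact ⟨[(i, true)], by simp [evalWord]⟩
  | one => exact ⟨[], by simp [evalWord]⟩
  | mul y z _ _ hy hz =>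
    obtain ⟨v, rfl⟩ := hy
    obtain ⟨w, rfl⟩ := hz
    exact ⟨v ++ w, by simp [evalWord]⟩
  | inv y _ hy =>
    obtain ⟨w, rfl⟩ := hy
    exact ⟨invWord w, evalWord_invWord gen w⟩

lemma exists_length_eq_wordNorm (hgen : Subgroup.closure (range gen) = ⊤) (x : G) :
    ∃ w, w.length = wordNorm gen x ∧ evalWord gen w = x := by
  obtain ⟨w, hw⟩ := exists_evalWord_eq gen hgen x
  have hne : {n | ∃ w, w.length = n ∧ evalWord gen w = x}.Nonempty := ⟨w.length, w, rfl, hw⟩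
  exact Nat.sInf_mem hne

lemma wordNorm_inv (x : G) : wordNorm gen x⁻¹ = wordNorm gen x := by
  have key : ∀ (y : G) (n : ℕ), (∃ w, w.length = n ∧ evalWord gen w = y) →
      ∃ w, w.length = n ∧ evalWord gen w = y⁻¹ := by
    rintro y n ⟨w, rfl, rfl⟩
    exact ⟨invWord w, length_invWord w, evalWord_invWord gen w⟩
  refine congrArg sInf (Set.ext fun n => ⟨fun h => ?_, key x n⟩)
  obtain ⟨w, hlen, hw⟩ := key x⁻¹ n h
  exact ⟨w, hlen, hw.trans (inv_inv x)⟩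

lemma ball_mono {r s : ℝ} (h : r ≤ s) : ball gen r ⊆ ball gen s :=
  fun _ hx => le_trans hx h

lemma ball_finite (hgen : Subgroup.closure (range gen) = ⊤) (r : ℝ) :
    (ball gen r).Finite := by
  refine ((List.finite_length_le (Fin m × Bool) ⌊r⌋₊).image (evalWord gen)).subset ?_
  intro x hx
  obtain ⟨w, hlen, hw⟩ := exists_length_eq_wordNorm gen hgen x
  exact ⟨w, (hlen ▸ Nat.le_floor hx : w.length ≤ ⌊r⌋₊), hw⟩

end WordNorm

lemma ncard_le_of_inv_mul_fst_mem {S : Set (G × G)} {T : Set G}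
    (hT : T.Finite) (x : G) (hS : ∀ p ∈ S, x = p.1 * p.2)
    (hST : ∀ p ∈ S, ∀ q ∈ S, p.1⁻¹ * q.1 ∈ T) : S.ncard ≤ T.ncard := by
  rcases S.eq_empty_or_nonempty with rfl | ⟨p₀, hp₀⟩
  · simp
  refine ncard_le_ncard_of_injOn (fun p => p₀.1⁻¹ * p.1) (hST p₀ hp₀) ?_ hT
  intro p hp q hq hpq
  have hfst : p.1 = q.1 := mul_left_cancel hpq
  have hsnd : p.2 = q.2 := mul_left_cancel ((hS p hp).symm.trans (hfst ▸ hS q hq))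
  exact Prod.ext hfst hsnd

lemma inv_mul_mem_ball_of_mem_ann {gen : Fin m → G} {δ : ℝ}
    (hhyp : IsHyperbolic gen δ) {ℓ a : ℝ} {x g g' h h' : G}
    (hgg' : x = g * g') (hhh' : x = h * h')
    (hg : g ∈ ann gen ℓ a) (hg' : g' ∈ ann gen ℓ a)
    (hh : h ∈ ann gen ℓ a) (hh' : h' ∈ ann gen ℓ a)
    (hx : x ∈ ann gen (2 * ℓ) (4 * a)) :
    g⁻¹ * h ∈ ball gen (5 * a + 2 * δ) := by
  simp only [ann, ball, Set.mem_sdiff, mem_ofPred_eq, not_le] at hg hg' hh hh' hx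
  have hg'_eq : g⁻¹ * x = g' := by rw [hgg']; group
  have hh'_eq : x⁻¹ * h = h'⁻¹ := by rw [hhh']; group
  have hgx : ℓ - 5 / 2 * a ≤ gromov gen g x := by
    unfold gromov; rw [hg'_eq]; linarith
  have hxh : ℓ - 5 / 2 * a ≤ gromov gen x h := by
    unfold gromov; rw [hh'_eq, wordNorm_inv]; linarith
  have hgh : ℓ - 5 / 2 * a - δ ≤ gromov gen g h :=
    le_trans (by linarith [le_min hgx hxh]) (hhyp g x h)
  unfold gromov at hgh
  show (wordNorm gen (g⁻¹ * h) : ℝ) ≤ 5 * a + 2 * δ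
  linarith

theorem statement9_general {G : Type*} [Group G] {m : ℕ} (gen : Fin m → G)
    (hgen : Subgroup.closure (Set.range gen) = ⊤)
    (δ : ℝ) (hhyp : IsHyperbolic gen δ)
    (ℓ a : ℕ)
    (x : G) (hx : x ∈ ann gen (2 * (ℓ : ℝ)) (4 * (a : ℝ))) :
    ({p : G × G | p.1 ∈ ann gen (ℓ : ℝ) (a : ℝ) ∧ p.2 ∈ ann gen (ℓ : ℝ) (a : ℝ) ∧
        x = p.1 * p.2}).ncard ≤
      (ball gen (6 * (a : ℝ) + 2 * δ)).ncard := by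
  refine ncard_le_of_inv_mul_fst_mem (ball_finite gen hgen _) x (fun p hp => hp.2.2) ?_
  rintro p ⟨hp₁, hp₂, hp⟩ q ⟨hq₁, hq₂, hq⟩
  refine ball_mono gen ?_ (inv_mul_mem_ball_of_mem_ann hhyp hp hq hp₁ hp₂ hq₁ hq₂ hx)
  linarith [a.cast_nonneg (α := ℝ)]

/-- in a `δ`-hyperbolic group, for `1 ≤ a ≤ ℓ` and `x ∈ S_{2ℓ,4a}`, the number
of pairs `(g,g') ∈ S_{ℓ,a} × S_{ℓ,a}` with `x = g g'` is at most `|B_{6a+2δ}|`. -/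
theorem statement9 {G : Type*} [Group G] {m : ℕ} (hm : 2 ≤ m) (gen : Fin m → G)
    (hgen : Subgroup.closure (Set.range gen) = ⊤)
    (δ : ℝ) (hδ : 0 ≤ δ) (hhyp : IsHyperbolic gen δ)
    (ℓ a : ℕ) (ha1 : 1 ≤ a) (ha : a ≤ ℓ)
    (x : G) (hx : x ∈ ann gen (2 * (ℓ : ℝ)) (4 * (a : ℝ))) :
    ({p : G × G | p.1 ∈ ann gen (ℓ : ℝ) (a : ℝ) ∧ p.2 ∈ ann gen (ℓ : ℝ) (a : ℝ) ∧
        x = p.1 * p.2}).ncard ≤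
      (ball gen (6 * (a : ℝ) + 2 * δ)).ncard :=
  statement9_general gen hgen δ hhyp ℓ a x hx

end GrowthRQ
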